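/- For x = wε^μ in the extended affine Weyl group and α ∈ Φ, one has ℓ(x⁻¹, α) = −ℓ(x, w⁻¹α), and consequently the set of length positive elements satisfies LP(x⁻¹) = w · LP(x) · w₀, where w₀ is the longest element of W. -/
import Mathlib


open scoped BigOperators
open Classical

variable {V : Type*} [AddCommGroup V] [Module ℚ V]

/-- A (reduced, crystallographic) root system datum in a rational vector space `V`,
with positivity determined by a regular linear functional `f`. -/
structure RS (V : Type*) [AddCommGroup V] [Module ℚ V] : Type _ where
  Φ : Set V
  finite : Φ.Finite
  nonzero : ∀ α ∈ Φ, α ≠ 0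
  f : Module.Dual ℚ V
  f_ne : ∀ α ∈ Φ, f α ≠ 0
  neg_mem : ∀ α ∈ Φ, -α ∈ Φ
  coroot : V → Module.Dual ℚ V
  coroot_self : ∀ α ∈ Φ, coroot α α = 2
  reflect_mem : ∀ α ∈ Φ, ∀ β ∈ Φ, β - coroot α β • α ∈ Φ

namespace RS

variable (R : RS V)

/-- The set of positive roots. -/
def pos : Set V := {α ∈ R.Φ | 0 < R.f α}

/-- The set of negative roots. -/
def negs : Set V := {α ∈ R.Φ | R.f α < 0}

/-- The indicator function `Φ⁺` of the set of positive roots. -/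
noncomputable def ind (α : V) : ℤ := if α ∈ R.pos then 1 else 0

/-- The positive roots as a finset. -/
noncomputable def posFinset : Finset V := (Set.Finite.subset R.finite (show R.pos ⊆ R.Φ from fun α hα => hα.1)).toFinset

/-- `2ρ`, the sum of the positive roots. -/
noncomputable def twoRho : V := ∑ α ∈ R.posFinset, α

/-- The length functional `ℓ(x, α) = ⟨μ, α⟩ + Φ⁺(α) - Φ⁺(wα)` of `x = w ε^μ`. -/
noncomputable def lenF (e : V ≃ₗ[ℚ] V) (μ : Module.Dual ℚ V) (α : V) : ℚ :=
  μ α + (R.ind α : ℚ) - (R.ind (e α) : ℚ)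

end RS

/-- Length of a Weyl group element: the number of positive roots sent to negative roots. -/
noncomputable def wlen (R : RS V) {W : Type*} [Group W] (ρ : W →* (V ≃ₗ[ℚ] V)) (v : W) : ℕ :=
  {α | α ∈ R.pos ∧ ρ v α ∈ R.negs}.ncard

/-- The set of length positive elements for `x = w ε^μ`. -/
def LP (R : RS V) {W : Type*} [Group W] (ρ : W →* (V ≃ₗ[ℚ] V)) (w : W)
    (μ : Module.Dual ℚ V) : Set W :=
  {v | ∀ α ∈ R.pos, 0 ≤ R.lenF (ρ w) μ (ρ v α)}


lemma RS.ind_neg (R : RS V) {β : V} (hβ : β ∈ R.Φ) : R.ind (-β) = 1 - R.ind β := by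
  have hf := R.f_ne β hβ
  by_cases h : 0 < R.f β
  · have h1 : β ∈ R.pos := ⟨hβ, h⟩
    have h2 : -β ∉ R.pos := by
      rintro ⟨-, hpos⟩
      rw [map_neg] at hpos
      linarith
    simp [RS.ind, h1, h2]
  · have hlt : R.f β < 0 := lt_of_le_of_ne (not_lt.mp h) hf
    have h1 : β ∉ R.pos := fun hc => h hc.2
    have h2 : -β ∈ R.pos := ⟨R.neg_mem β hβ, by rw [map_neg]; linarith⟩
    simp [RS.ind, h1, h2]

lemma RS.lenF_neg (R : RS V) (e : V ≃ₗ[ℚ] V) (μ : Module.Dual ℚ V) {β : V}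
    (hβ : β ∈ R.Φ) (heβ : e β ∈ R.Φ) : R.lenF e μ (-β) = - R.lenF e μ β := by
  unfold RS.lenF
  rw [map_neg, map_neg, R.ind_neg hβ, R.ind_neg heβ]
  push_cast; ring

/-- `ℓ(x⁻¹, α) = -ℓ(x, w⁻¹α)` and `LP(x⁻¹) = w · LP(x) · w₀`, where
`x = w ε^μ`, `x⁻¹ = w⁻¹ ε^{-wμ}` (so its translation part is `-μ ∘ w⁻¹`), and `w₀` is the
longest element of `W` (characterized by `w₀ Φ⁺ = Φ⁻`). -/
theorem statement10 (R : RS V) {W : Type*} [Group W] (ρ : W →* (V ≃ₗ[ℚ] V))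
    (hρΦ : ∀ u : W, ∀ α ∈ R.Φ, ρ u α ∈ R.Φ)
    (w : W) (μ : Module.Dual ℚ V) (w0 : W)
    (hw0 : (fun α => ρ w0 α) '' R.pos = R.negs) :
    (∀ α ∈ R.Φ, R.lenF (ρ w⁻¹) (-(μ.comp (ρ w⁻¹).toLinearMap)) α
        = - R.lenF (ρ w) μ (ρ w⁻¹ α)) ∧
      LP R ρ w⁻¹ (-(μ.comp (ρ w⁻¹).toLinearMap)) = (fun v => w * v * w0) '' LP R ρ w μ := by
  have hcomp : ∀ (u v : W) (α : V), ρ (u * v) α = ρ u (ρ v α) := by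
    intro u v α; rw [map_mul]; rfl
  have hw_winv : ∀ α : V, ρ w (ρ w⁻¹ α) = α := by
    intro α
    rw [← hcomp, mul_inv_cancel, map_one]; rfl
  have key : ∀ α : V, R.lenF (ρ w⁻¹) (-(μ.comp (ρ w⁻¹).toLinearMap)) α
      = - R.lenF (ρ w) μ (ρ w⁻¹ α) := by
    intro α
    unfold RS.lenF
    simp only [LinearMap.neg_apply, LinearMap.comp_apply, LinearEquiv.coe_coe, hw_winv]
    ring
  refine ⟨fun α _ => key α, ?_⟩
  ext v'
  constructor
  · intro h
    refine ⟨w⁻¹ * v' * w0⁻¹, ?_, by group⟩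
    intro γ hγ
    -- find α ∈ pos with ρ w0 α = -γ
    have hnegγ : -γ ∈ R.negs := by
      refine ⟨R.neg_mem γ hγ.1, ?_⟩
      rw [map_neg]; linarith [hγ.2]
    rw [← hw0] at hnegγ
    obtain ⟨α, hα, hα2⟩ := hnegγ
    have hw0inv : ρ (w0⁻¹) γ = -α := by
      have : ρ (w0⁻¹) (ρ w0 α) = α := by
        rw [← hcomp, inv_mul_cancel, map_one]; rfl
      have h2 : ρ (w0⁻¹) (-γ) = α := by rw [← hα2]; exact this
      rw [map_neg] at h2
      exact neg_eq_iff_eq_neg.mp h2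
    have hβΦ : ρ (w⁻¹ * v') α ∈ R.Φ := hρΦ _ α hα.1
    have heβΦ : ρ w (ρ (w⁻¹ * v') α) ∈ R.Φ := hρΦ _ _ hβΦ
    have hle : R.lenF (ρ w) μ (ρ (w⁻¹ * v') α) ≤ 0 := by
      have := h α hα
      rw [key (ρ v' α)] at this
      rw [hcomp]
      have : - R.lenF (ρ w) μ (ρ w⁻¹ (ρ v' α)) ≥ 0 := this
      linarith
    have heq : ρ (w⁻¹ * v' * w0⁻¹) γ = -(ρ (w⁻¹ * v') α) := by
      rw [hcomp, hw0inv, map_neg]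
    rw [heq, R.lenF_neg _ _ hβΦ heβΦ]
    linarith
  · rintro ⟨v, hv, rfl⟩
    intro α hα
    rw [key]
    have hβ : ρ w0 α ∈ R.negs := by rw [← hw0]; exact ⟨α, hα, rfl⟩
    have hnegβ : -(ρ w0 α) ∈ R.pos := by
      refine ⟨R.neg_mem _ hβ.1, ?_⟩
      rw [map_neg]; linarith [hβ.2]
    have heq : ρ w⁻¹ (ρ (w * v * w0) α) = -(ρ v (-(ρ w0 α))) := by
      simp only [map_neg, neg_neg]
      rw [← hcomp, ← hcomp]
      have h3 : w⁻¹ * (w * v * w0) = v * w0 := by group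
      rw [h3]
    have hβΦ : ρ v (-(ρ w0 α)) ∈ R.Φ := hρΦ _ _ hnegβ.1
    have heβΦ : ρ w (ρ v (-(ρ w0 α))) ∈ R.Φ := hρΦ _ _ hβΦ
    rw [heq, R.lenF_neg _ _ hβΦ heβΦ]
    have := hv _ hnegβ
    linarith
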